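/- arXiv:1112.3696 — 2 statements merged into one kernel-verified Lean document; each statement's English description precedes it below -/
import Mathlib

section
/- Suppose the dynamical system (X,T,μ) satisfies the exponential concentration inequality with constant C > 0. Then there exists a constant D > 0 such that for every ε > 0, every n ≥ 1, every separately Lipschitz K : (ℝ^d)^n → ℝ, and every t > 0, μ_n ⊗ P^n(|K(y_0,…,y_{n−1}) − E_{μ_n ⊗ P^n}[K(y_0,…,y_{n−1})]| ≥ t) ≤ 2 exp(−t² / (4 D (1 + ε²) Σ_{j=0}^{n−1} Lip_j(K)²)). -/
/-!
Averaging out the noise, put `K̄ z = E_ξ K(z + εξ)` and split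
`K(y) - E K(y) = (K̄(x, Tx, …) - E K̄(x, Tx, …)) + (K(y) - K̄(x, Tx, …))`.
`K̄` has the same Lipschitz constants as `K`, so the concentration inequality of the dynamics,
applied to `λK̄` for every `λ`, makes the first term sub-Gaussian with variance proxy `2C∑ Lⱼ²`.
Conditionally on the orbit, the second term is a separately Lipschitz function of independent
noise bounded by `ε`, hence sub-Gaussian with proxy `ε²∑ Lⱼ²` by Hoeffding's lemma applied one
coordinate at a time. Proxies add under such conditioning, and the Chernoff bound for both tails
gives the claim with `D = max C 0 + 1`.
-/

open MeasureTheory Real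

noncomputable section

/-- `K` is separately Lipschitz in each of its `n` variables, with
`L j` a Lipschitz constant for the `j`-th variable. -/
def SepLip {E : Type*} [PseudoMetricSpace E] {n : ℕ}
    (K : (Fin n → E) → ℝ) (L : Fin n → ℝ) : Prop :=
  ∀ (x : Fin n → E) (j : Fin n) (y : E),
    |K x - K (Function.update x j y)| ≤ L j * dist (x j) y

open ProbabilityTheory Set
open scoped NNReal

namespace SepLip

section PseudoMetric

variable {E : Type*} [PseudoMetricSpace E] {n : ℕ} {K : (Fin n → E) → ℝ} {L : Fin n → ℝ}

theorem abs (hK : SepLip K L) : SepLip K fun j => |L j| := fun x j y =>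
  (hK x j y).trans (mul_le_mul_of_nonneg_right (le_abs_self _) dist_nonneg)

theorem const_mul (hK : SepLip K L) (c : ℝ) : SepLip (fun x => c * K x) fun j => |c| * L j :=
  fun x j y => by
    rw [← mul_sub, abs_mul, mul_assoc]
    exact mul_le_mul_of_nonneg_left (hK x j y) (abs_nonneg c)

theorem comp_cons {F : (Fin (n + 1) → E) → ℝ} {M : Fin (n + 1) → ℝ} (hF : SepLip F M) (a : E) :
    SepLip (fun b => F (Fin.cons a b)) fun j => M j.succ :=
  fun b j y => by simpa only [← Fin.cons_update, Fin.cons_succ] using hF (Fin.cons a b) j.succ y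

theorem lipschitzWith_cons {F : (Fin (n + 1) → E) → ℝ} {M : Fin (n + 1) → ℝ} (hF : SepLip F M)
    (b : Fin n → E) : LipschitzWith ‖M 0‖₊ fun a => F (Fin.cons a b) :=
  LipschitzWith.of_dist_le_mul fun a a' => by
    have h := hF (Fin.cons a b) 0 a'
    rw [Fin.update_cons_zero, Fin.cons_zero] at h
    rw [Real.dist_eq, coe_nnnorm, Real.norm_eq_abs]
    exact h.trans (mul_le_mul_of_nonneg_right (le_abs_self _) dist_nonneg)

theorem abs_sub_le_finset_sum (hK : SepLip K L) (s : Finset (Fin n)) {x y : Fin n → E}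
    (hxy : ∀ j ∉ s, x j = y j) : |K x - K y| ≤ ∑ j ∈ s, L j * dist (x j) (y j) := by
  induction s using Finset.induction_on generalizing x with
  | empty => simp [funext fun j => hxy j (Finset.notMem_empty j)]
  | insert a s ha ih =>
    set x' := Function.update x a (y a)
    have hx' : ∀ j ∉ s, x' j = y j := fun j hj => by
      by_cases hja : j = a
      · subst hja; simp [x']
      · simpa [x', hja] using hxy j (by simp [hja, hj])
    have hsum : ∑ j ∈ s, L j * dist (x' j) (y j) = ∑ j ∈ s, L j * dist (x j) (y j) :=
      Finset.sum_congr rfl fun j hj => by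
        simp only [x', Function.update_of_ne (ne_of_mem_of_not_mem hj ha)]
    rw [Finset.sum_insert ha, ← hsum]
    calc |K x - K y| ≤ |K x - K x'| + |K x' - K y| := abs_sub_le _ _ _
      _ ≤ _ := add_le_add (hK x a (y a)) (ih hx')

theorem abs_sub_le_sum (hK : SepLip K L) (x y : Fin n → E) :
    |K x - K y| ≤ ∑ j, L j * dist (x j) (y j) :=
  hK.abs_sub_le_finset_sum Finset.univ fun j hj => absurd (Finset.mem_univ j) hj

theorem lipschitzWith (hK : SepLip K L) : LipschitzWith (∑ j, ‖L j‖₊) K := by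
  refine LipschitzWith.of_dist_le_mul fun x y => ?_
  push_cast
  rw [Real.dist_eq, Finset.sum_mul]
  refine (hK.abs.abs_sub_le_sum x y).trans (Finset.sum_le_sum fun j _ => ?_)
  rw [Real.norm_eq_abs]
  exact mul_le_mul_of_nonneg_left (dist_le_pi_dist x y j) (abs_nonneg _)

theorem continuous (hK : SepLip K L) : Continuous K :=
  hK.lipschitzWith.continuous

theorem mem_Icc_of_forall_dist_le (hK : SepLip K L) {x c : Fin n → E} {r : ℝ}
    (hx : ∀ j, dist (x j) (c j) ≤ r) :
    K x ∈ Icc (K c - (∑ j, |L j|) * r) (K c + (∑ j, |L j|) * r) := by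
  have h : |K x - K c| ≤ (∑ j, |L j|) * r := by
    rw [Finset.sum_mul]
    exact (hK.abs.abs_sub_le_sum x c).trans
      (Finset.sum_le_sum fun j _ => mul_le_mul_of_nonneg_left (hx j) (abs_nonneg _))
  constructor <;> linarith [abs_le.1 h]

theorem integral {Ω : Type*} [MeasurableSpace Ω] {ν : Measure Ω} [IsProbabilityMeasure ν]
    {F : (Fin n → E) → Ω → ℝ} (hF : ∀ ω, SepLip (fun x => F x ω) L)
    (hint : ∀ x, Integrable (F x) ν) : SepLip (fun x => ∫ ω, F x ω ∂ν) L := fun x j y => by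
  rw [← integral_sub (hint x) (hint _)]
  simpa using norm_integral_le_of_norm_le_const (μ := ν) (C := L j * dist (x j) y)
    (.of_forall fun ω => (Real.norm_eq_abs _).trans_le (hF ω x j y))

end PseudoMetric

section Normed

variable {V : Type*} [SeminormedAddCommGroup V] {n : ℕ} {K : (Fin n → V) → ℝ} {L : Fin n → ℝ}

theorem comp_add_left (hK : SepLip K L) (z : Fin n → V) : SepLip (fun ξ => K (z + ξ)) L :=
  fun ξ j y => by
    simpa [Function.update_add, Function.update_eq_self] using hK (z + ξ) j (z j + y)

theorem comp_add_right (hK : SepLip K L) (w : Fin n → V) : SepLip (fun z => K (z + w)) L := by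
  simpa only [add_comm _ w] using hK.comp_add_left w

variable [NormedSpace ℝ V]

theorem comp_smul (hK : SepLip K L) (c : ℝ) : SepLip (fun ξ => K (c • ξ)) fun j => |c| * L j :=
  fun ξ j y => by
    have h := hK (c • ξ) j (c • y)
    rw [Function.update_smul, Pi.smul_apply, dist_smul₀, Real.norm_eq_abs] at h
    linarith

end Normed

end SepLip

section SubGaussian

variable {Ω : Type*} [MeasurableSpace Ω]

theorem integrable_exp_mul_sub_of_mem_Icc {μ : Measure Ω} [IsFiniteMeasure μ] {X : Ω → ℝ}
    {a b : ℝ} (hm : AEMeasurable X μ) (hb : ∀ᵐ ω ∂μ, X ω ∈ Icc a b) (t c : ℝ) :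
    Integrable (fun ω => exp (t * (X ω - c))) μ :=
  integrable_exp_mul_of_mem_Icc (hm.sub_const c)
    (hb.mono fun _ h => ⟨sub_le_sub_right h.1 c, sub_le_sub_right h.2 c⟩)

theorem ProbabilityTheory.HasSubgaussianMGF.measureReal_abs_ge_le {μ : Measure Ω}
    [IsFiniteMeasure μ] {X : Ω → ℝ} {c : ℝ≥0} (h : HasSubgaussianMGF X c μ) {ε : ℝ}
    (hε : 0 ≤ ε) : μ.real {ω | ε ≤ |X ω|} ≤ 2 * exp (-ε ^ 2 / (2 * c)) := by
  have hsplit : {ω | ε ≤ |X ω|} ⊆ {ω | ε ≤ X ω} ∪ {ω | ε ≤ (-X) ω} :=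
    fun ω (hω : ε ≤ |X ω|) => le_abs.1 hω
  calc μ.real {ω | ε ≤ |X ω|} ≤ μ.real {ω | ε ≤ X ω} + μ.real {ω | ε ≤ (-X) ω} :=
        (measureReal_mono hsplit).trans (measureReal_union_le _ _)
    _ ≤ exp (-ε ^ 2 / (2 * c)) + exp (-ε ^ 2 / (2 * c)) :=
        add_le_add (h.measure_ge_le hε) (h.neg.measure_ge_le hε)
    _ = 2 * exp (-ε ^ 2 / (2 * c)) := by ring

theorem ProbabilityTheory.HasSubgaussianMGF.add_prod {β : Type*} [MeasurableSpace β]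
    {μ : Measure Ω} {ν : Measure β} [SFinite μ] [SFinite ν] {X : Ω → ℝ} {Y : Ω → β → ℝ}
    {cX cY : ℝ≥0} (hX : HasSubgaussianMGF X cX μ) (hY : ∀ᵐ ω ∂μ, HasSubgaussianMGF (Y ω) cY ν)
    (hint : ∀ t, Integrable (fun p : Ω × β => exp (t * (X p.1 + Y p.1 p.2))) (μ.prod ν)) :
    HasSubgaussianMGF (fun p : Ω × β => X p.1 + Y p.1 p.2) (cX + cY) (μ.prod ν) where
  integrable_exp_mul := hint
  mgf_le t := calc
    mgf _ (μ.prod ν) t = ∫ ω, exp (t * X ω) * mgf (Y ω) ν t ∂μ := by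
      simp_rw [mgf, integral_prod _ (hint t), mul_add, exp_add, integral_const_mul]
    _ ≤ ∫ ω, exp (t * X ω) * exp (cY * t ^ 2 / 2) ∂μ :=
      integral_mono_of_nonneg (.of_forall fun _ => mul_nonneg (exp_nonneg _) mgf_nonneg)
        ((hX.integrable_exp_mul t).mul_const _)
        (hY.mono fun _ hω => mul_le_mul_of_nonneg_left (hω.mgf_le t) (exp_nonneg _))
    _ = mgf X μ t * exp (cY * t ^ 2 / 2) := integral_mul_const _ _
    _ ≤ exp (cX * t ^ 2 / 2) * exp (cY * t ^ 2 / 2) :=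
      mul_le_mul_of_nonneg_right (hX.mgf_le t) (exp_nonneg _)
    _ = exp (↑(cX + cY) * t ^ 2 / 2) := by rw [← exp_add, NNReal.coe_add]; ring_nf

end SubGaussian

section ConsSplit

variable {E : Type*} [MeasurableSpace E]

/-- The first coordinate is moved last, so that in the product measure it is integrated first. -/
def consSplitEquiv (E : Type*) [MeasurableSpace E] (n : ℕ) :
    (Fin (n + 1) → E) ≃ᵐ (Fin n → E) × E :=
  (MeasurableEquiv.piFinSuccAbove (fun _ => E) 0).trans MeasurableEquiv.prodComm

theorem consSplitEquiv_symm_apply {n : ℕ} (p : (Fin n → E) × E) :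
    (consSplitEquiv E n).symm p = Fin.cons p.2 p.1 := by
  simp [consSplitEquiv, MeasurableEquiv.piFinSuccAbove, Fin.consEquiv, MeasurableEquiv.prodComm]

theorem measurePreserving_consSplitEquiv (P : Measure E) [SigmaFinite P] (n : ℕ) :
    MeasurePreserving (consSplitEquiv E n) (Measure.pi fun _ => P)
      ((Measure.pi fun _ => P).prod P) :=
  Measure.measurePreserving_swap.comp (measurePreserving_piFinSuccAbove (fun _ => P) 0)

end ConsSplit

section BoundedNoise

variable {E : Type*} [PseudoMetricSpace E] [MeasurableSpace E]

theorem ae_forall_dist_le_pi {ι : Type*} [Fintype ι] {P : Measure E} [SigmaFinite P] {x₀ : E}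
    {r : ℝ} (hP : ∀ᵐ x ∂P, dist x x₀ ≤ r) :
    ∀ᵐ x ∂(Measure.pi fun _ : ι => P), ∀ j, dist (x j) x₀ ≤ r :=
  ae_all_iff.2 fun j => (Measure.tendsto_eval_ae_ae (μ := fun _ : ι => P) (i := j)).eventually hP

theorem SepLip.ae_mem_Icc_pi {n : ℕ} {P : Measure E} [SigmaFinite P] {x₀ : E} {r : ℝ}
    (hP : ∀ᵐ x ∂P, dist x x₀ ≤ r) {f : (Fin n → E) → ℝ} {M : Fin n → ℝ} (hf : SepLip f M) :
    ∀ᵐ x ∂(Measure.pi fun _ => P),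
      f x ∈ Icc (f (fun _ => x₀) - (∑ j, |M j|) * r) (f (fun _ => x₀) + (∑ j, |M j|) * r) :=
  (ae_forall_dist_le_pi hP).mono fun _ hx => hf.mem_Icc_of_forall_dist_le hx

theorem LipschitzWith.ae_mem_Icc {P : Measure E} {x₀ : E} {r : ℝ} (hP : ∀ᵐ x ∂P, dist x x₀ ≤ r)
    {M : ℝ≥0} {g : E → ℝ} (hg : LipschitzWith M g) :
    ∀ᵐ x ∂P, g x ∈ Icc (g x₀ - M * r) (g x₀ + M * r) := hP.mono fun x hx => by
  have h := (hg.dist_le_mul x x₀).trans (mul_le_mul_of_nonneg_left hx M.coe_nonneg)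
  rw [Real.dist_eq] at h
  constructor <;> linarith [abs_le.1 h]

variable [OpensMeasurableSpace E]

theorem LipschitzWith.hasSubgaussianMGF_sub_integral {P : Measure E} [IsProbabilityMeasure P]
    {x₀ : E} {r : ℝ≥0} (hP : ∀ᵐ x ∂P, dist x x₀ ≤ r) {M : ℝ≥0} {g : E → ℝ}
    (hg : LipschitzWith M g) :
    HasSubgaussianMGF (fun x => g x - ∫ y, g y ∂P) ((M * r) ^ 2) P := by
  convert hasSubgaussianMGF_of_mem_Icc hg.continuous.measurable.aemeasurable
    (hg.ae_mem_Icc hP) using 1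
  ext
  simp only [NNReal.coe_pow, NNReal.coe_mul, NNReal.coe_div, NNReal.coe_ofNat, coe_nnnorm,
    Real.norm_eq_abs]
  rw [add_sub_sub_cancel, abs_of_nonneg (by positivity)]
  ring

variable [SecondCountableTopology E]

theorem SepLip.hasSubgaussianMGF_sub_integral_pi {P : Measure E} [IsProbabilityMeasure P]
    {x₀ : E} {r : ℝ≥0} (hP : ∀ᵐ x ∂P, dist x x₀ ≤ r) {n : ℕ} {f : (Fin n → E) → ℝ}
    {M : Fin n → ℝ} (hf : SepLip f M) :
    HasSubgaussianMGF (fun x => f x - ∫ y, f y ∂(Measure.pi fun _ => P))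
      (∑ j, (‖M j‖₊ * r) ^ 2) (Measure.pi fun _ => P) := by
  induction n with
  | zero =>
    have hzero : (fun x => f x - ∫ y, f y ∂(Measure.pi fun _ => P)) = fun _ => 0 :=
      funext fun x => by
        rw [show f = fun _ => f x from funext fun y => congrArg f (Subsingleton.elim y x)]
        simp
    simp [hzero]
  | succ n ih =>
    set ν := Measure.pi fun _ : Fin n => P
    set σ := consSplitEquiv E n
    have hσ := measurePreserving_consSplitEquiv P n
    have hcomp_σ_symm {g : (Fin (n + 1) → E) → ℝ} (hg : Integrable g (Measure.pi fun _ => P)) :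
        Integrable (g ∘ σ.symm) (ν.prod P) :=
      (hσ.symm.integrable_comp_emb σ.symm.measurableEmbedding).2 hg
    have hslice_int (b : Fin n → E) : Integrable (fun a => f (Fin.cons a b)) P :=
      .of_mem_Icc _ _ (hf.lipschitzWith_cons b).continuous.measurable.aemeasurable
        ((hf.lipschitzWith_cons b).ae_mem_Icc hP)
    set h : (Fin n → E) → ℝ := fun b => ∫ a, f (Fin.cons a b) ∂P
    have hh : SepLip h fun j => M j.succ := SepLip.integral (fun a => hf.comp_cons a) hslice_int
    have hf_meas : AEMeasurable f (Measure.pi fun _ => P) := hf.continuous.measurable.aemeasurable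
    have hf_Icc := hf.ae_mem_Icc_pi hP
    have hmean : ∫ x, f x ∂(Measure.pi fun _ => P) = ∫ b, h b ∂ν := by
      rw [← hσ.symm.integral_comp' f,
        integral_prod (fun p => f (σ.symm p)) (hcomp_σ_symm (.of_mem_Icc _ _ hf_meas hf_Icc))]
      simp only [consSplitEquiv_symm_apply, h, σ]
    have hsplit (p : (Fin n → E) × E) : (h p.1 - ∫ b, h b ∂ν) + (f (Fin.cons p.2 p.1) - h p.1)
        = f (σ.symm p) - ∫ x, f x ∂(Measure.pi fun _ => P) := by
      rw [consSplitEquiv_symm_apply, hmean]; ring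
    -- `f - E f = (h - E h) + (f - h)`: induction hypothesis for `h`, Hoeffding in the first
    -- coordinate for `f - h`.
    have hprod := (ih hh).add_prod
      (.of_forall fun b => (hf.lipschitzWith_cons b).hasSubgaussianMGF_sub_integral hP)
      fun t => (hcomp_σ_symm (integrable_exp_mul_sub_of_mem_Icc hf_meas hf_Icc t _)).congr
        (.of_forall fun p => by rw [Function.comp_apply, ← hsplit p])
    rw [← hσ.map_eq] at hprod
    convert hprod.of_map σ.measurable.aemeasurable using 1
    · ext x
      exact ((hsplit (σ x)).trans (by simp)).symm
    · rw [Fin.sum_univ_succ, add_comm]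

end BoundedNoise

def HasExpConcentration {Ω E : Type*} [MeasurableSpace Ω] [PseudoMetricSpace E] (μ : Measure Ω)
    {n : ℕ} (Z : Ω → Fin n → E) (C : ℝ) : Prop :=
  ∀ (K : (Fin n → E) → ℝ) (L : Fin n → ℝ), SepLip K L →
    ∫ ω, exp (K (Z ω) - ∫ ω', K (Z ω') ∂μ) ∂μ ≤ exp (C * ∑ j, L j ^ 2)

theorem HasExpConcentration.hasSubgaussianMGF {Ω E : Type*} [MeasurableSpace Ω]
    [PseudoMetricSpace E] {μ : Measure Ω} {n : ℕ} {Z : Ω → Fin n → E} {C : ℝ}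
    (hconc : HasExpConcentration μ Z C) {K : (Fin n → E) → ℝ} {L : Fin n → ℝ} (hK : SepLip K L)
    (hint : ∀ t, Integrable (fun ω => exp (t * (K (Z ω) - ∫ ω', K (Z ω') ∂μ))) μ) :
    HasSubgaussianMGF (fun ω => K (Z ω) - ∫ ω', K (Z ω') ∂μ)
      (2 * C.toNNReal * ∑ j, ‖L j‖₊ ^ 2) μ where
  integrable_exp_mul := hint
  mgf_le t := by
    have h := hconc _ _ (hK.const_mul t)
    rw [integral_const_mul] at h
    calc mgf _ μ t = ∫ ω, exp (t * K (Z ω) - t * ∫ ω', K (Z ω') ∂μ) ∂μ := by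
          simp only [mgf, mul_sub]
      _ ≤ exp (C * ∑ j, (|t| * L j) ^ 2) := h
      _ ≤ exp (C.toNNReal * ∑ j, (|t| * L j) ^ 2) :=
          exp_le_exp.2 (mul_le_mul_of_nonneg_right C.le_coe_toNNReal (by positivity))
      _ = _ := by
          push_cast
          simp only [Real.norm_eq_abs, mul_pow, sq_abs, ← Finset.mul_sum]
          ring_nf

section Observed

variable {V : Type*} [SeminormedAddCommGroup V] [NormedSpace ℝ V] [MeasurableSpace V]
  [BorelSpace V] [SecondCountableTopology V] {n : ℕ} {P : Measure V} [IsProbabilityMeasure P]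
  {r : ℝ≥0} {K : (Fin n → V) → ℝ} {L : Fin n → ℝ}

theorem SepLip.integral_add_smul_pi (hP : ∀ᵐ ξ ∂P, dist ξ 0 ≤ r) (hK : SepLip K L) (ε : ℝ) :
    SepLip (fun z => ∫ ξ, K (z + ε • ξ) ∂(Measure.pi fun _ => P)) L := by
  refine SepLip.integral (fun ξ => hK.comp_add_right (ε • ξ)) fun z => ?_
  have hnoise := (hK.comp_add_left z).comp_smul ε
  exact .of_mem_Icc _ _ hnoise.continuous.measurable.aemeasurable (hnoise.ae_mem_Icc_pi hP)

theorem HasExpConcentration.hasSubgaussianMGF_add_smul_noise {Ω : Type*} [MeasurableSpace Ω]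
    {μ : Measure Ω} [IsProbabilityMeasure μ] {Z : Ω → Fin n → V} {C : ℝ}
    (hconc : HasExpConcentration μ Z C) (hZ : Measurable Z) {R : ℝ}
    (hZR : ∀ᵐ ω ∂μ, ∀ i, ‖Z ω i‖ ≤ R) (hP : ∀ᵐ ξ ∂P, ‖ξ‖ ≤ r) (hK : SepLip K L) (ε : ℝ) :
    HasSubgaussianMGF (fun p : Ω × (Fin n → V) =>
        K (Z p.1 + ε • p.2) - ∫ q, K (Z q.1 + ε • q.2) ∂(μ.prod (Measure.pi fun _ => P)))
      ((2 * C.toNNReal + (‖ε‖₊ * r) ^ 2) * ∑ j, ‖L j‖₊ ^ 2) (μ.prod (Measure.pi fun _ => P)) := by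
  set ν := Measure.pi fun _ : Fin n => P
  have hP' : ∀ᵐ ξ ∂P, dist ξ 0 ≤ r := by simpa only [dist_zero_right] using hP
  set Kbar : (Fin n → V) → ℝ := fun z => ∫ ξ, K (z + ε • ξ) ∂ν
  have hKbar : SepLip Kbar L := hK.integral_add_smul_pi hP' ε
  have hKbar_Icc : ∀ᵐ ω ∂μ, Kbar (Z ω) ∈
      Icc (Kbar 0 - (∑ j, |L j|) * R) (Kbar 0 + (∑ j, |L j|) * R) :=
    hZR.mono fun ω h => hKbar.mem_Icc_of_forall_dist_le fun j => by simpa using h j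
  have hK_Icc : ∀ᵐ p ∂(μ.prod ν), K (Z p.1 + ε • p.2) ∈
      Icc (K 0 - (∑ j, |L j|) * (R + |ε| * r)) (K 0 + (∑ j, |L j|) * (R + |ε| * r)) := by
    filter_upwards [Measure.quasiMeasurePreserving_fst.ae hZR,
      Measure.quasiMeasurePreserving_snd.ae (ae_forall_dist_le_pi hP')] with p hZp hξp
    refine hK.mem_Icc_of_forall_dist_le fun j => ?_
    rw [Pi.zero_apply, dist_zero_right]
    refine (norm_add_le _ _).trans (add_le_add (hZp j) ?_)
    rw [Pi.smul_apply, norm_smul, Real.norm_eq_abs]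
    exact mul_le_mul_of_nonneg_left (by simpa using hξp j) (abs_nonneg ε)
  have hK_meas : AEMeasurable (fun p : Ω × (Fin n → V) => K (Z p.1 + ε • p.2)) (μ.prod ν) :=
    (hK.continuous.measurable.comp
      ((hZ.comp measurable_fst).add (measurable_snd.const_smul ε))).aemeasurable
  have hmean : ∫ p, K (Z p.1 + ε • p.2) ∂(μ.prod ν) = ∫ ω, Kbar (Z ω) ∂μ :=
    integral_prod _ (.of_mem_Icc _ _ hK_meas hK_Icc)
  have hdyn := hconc.hasSubgaussianMGF hKbar
    (integrable_exp_mul_sub_of_mem_Icc (hKbar.continuous.measurable.comp hZ).aemeasurable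
      hKbar_Icc · _)
  have hsplit (p : Ω × (Fin n → V)) :
      (Kbar (Z p.1) - ∫ ω, Kbar (Z ω) ∂μ) + (K (Z p.1 + ε • p.2) - Kbar (Z p.1))
        = K (Z p.1 + ε • p.2) - ∫ q, K (Z q.1 + ε • q.2) ∂(μ.prod ν) := by
    rw [hmean]; ring
  have hsum := hdyn.add_prod (Y := fun ω ξ => K (Z ω + ε • ξ) - Kbar (Z ω))
    (.of_forall fun ω =>
      ((hK.comp_add_left (Z ω)).comp_smul ε).hasSubgaussianMGF_sub_integral_pi hP')
    fun t => (integrable_exp_mul_sub_of_mem_Icc hK_meas hK_Icc t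
      (∫ q, K (Z q.1 + ε • q.2) ∂(μ.prod ν))).congr (.of_forall fun p => by simp only [hsplit])
  convert hsum.congr (.of_forall hsplit) using 1
  simp only [nnnorm_mul, nnnorm_abs, add_mul, Finset.mul_sum, ← Finset.sum_add_distrib]
  exact Finset.sum_congr rfl fun j _ => by ring

end Observed

theorem neg_div_mul_le_neg_div_mul {x a b S : ℝ} (hx : 0 ≤ x) (ha : 0 < a) (hab : a ≤ b)
    (hS : 0 ≤ S) : -x / (a * S) ≤ -x / (b * S) := by
  rcases hS.eq_or_lt with rfl | hS
  · simp
  rw [neg_div, neg_div, neg_le_neg_iff]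
  exact div_le_div_of_nonneg_left hx (by positivity) (by gcongr)

theorem observed_system_exponential_deviation_general {d : ℕ}
    (X : Set (EuclideanSpace ℝ (Fin d))) (hX : IsCompact X)
    (T : EuclideanSpace ℝ (Fin d) → EuclideanSpace ℝ (Fin d))
    (hT : Measurable T) (hTX : Set.MapsTo T X X)
    (μ : Measure (EuclideanSpace ℝ (Fin d))) [IsProbabilityMeasure μ]
    (hμX : μ X = 1)
    (C : ℝ)
    (hconc : ∀ (n : ℕ), 1 ≤ n → ∀ (K : (Fin n → EuclideanSpace ℝ (Fin d)) → ℝ)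
      (L : Fin n → ℝ), SepLip K L →
      ∫ x, Real.exp (K (fun i => T^[(i : ℕ)] x)
          - ∫ z, K (fun i => T^[(i : ℕ)] z) ∂μ) ∂μ
        ≤ Real.exp (C * ∑ j, L j ^ 2))
    (P : Measure (EuclideanSpace ℝ (Fin d))) [IsProbabilityMeasure P]
    (hP : ∀ᵐ ξ ∂P, ‖ξ‖ ≤ 1) :
    ∃ D : ℝ, 0 < D ∧ ∀ ε : ℝ, 0 < ε → ∀ (n : ℕ), 1 ≤ n →
      ∀ (K : (Fin n → EuclideanSpace ℝ (Fin d)) → ℝ) (L : Fin n → ℝ), SepLip K L →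
      ∀ t : ℝ, 0 < t →
      ((μ.prod (Measure.pi fun _ : Fin n => P))
          {p | t ≤ |K (fun i => T^[(i : ℕ)] p.1 + ε • p.2 i)
            - ∫ p', K (fun i => T^[(i : ℕ)] p'.1 + ε • p'.2 i)
                ∂(μ.prod (Measure.pi fun _ : Fin n => P))|}).toReal
        ≤ 2 * Real.exp (-t ^ 2 / (4 * D * (1 + ε ^ 2) * ∑ j, L j ^ 2)) := by
  refine ⟨C.toNNReal + 1, by positivity, fun ε hε n hn K L hK t ht => ?_⟩
  obtain ⟨R, hR⟩ := hX.isBounded.exists_norm_le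
  have horbit : ∀ᵐ x ∂μ, ∀ i : Fin n, ‖T^[i] x‖ ≤ R :=
    (show ∀ᵐ x ∂μ, x ∈ X from (mem_ae_iff_prob_eq_one hX.measurableSet).2 hμX).mono
      fun x hx i => hR _ (hTX.iterate i hx)
  have hsub := HasExpConcentration.hasSubgaussianMGF_add_smul_noise
    (Z := fun x (i : Fin n) => T^[i] x) (r := 1) (hconc n hn)
    (measurable_pi_lambda _ fun i => hT.iterate i) horbit (by simpa using hP) hK ε
  refine (hsub.measureReal_abs_ge_le ht.le).trans ?_
  have hS : (((2 * C.toNNReal + (‖ε‖₊ * 1) ^ 2) * ∑ j, ‖L j‖₊ ^ 2 : ℝ≥0) : ℝ)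
      = (2 * C.toNNReal + ε ^ 2) * ∑ j, L j ^ 2 := by
    push_cast
    simp [sq_abs]
  rw [hS, ← mul_assoc]
  gcongr 2 * exp ?_
  have hC := C.toNNReal.coe_nonneg
  refine neg_div_mul_le_neg_div_mul (sq_nonneg t) ?_ ?_ (by positivity)
  · linarith [pow_pos hε 2]
  · nlinarith [mul_nonneg hC (sq_nonneg ε)]

/-- If the dynamical system `(X,T,μ)` satisfies the exponential concentration
inequality, then the observed system satisfies a Gaussian deviation bound:
`μ_n ⊗ P^n(|K(y₀,…,y_{n-1}) - E[K]| ≥ t) ≤ 2 exp(-t²/(4D(1+ε²) ∑ Lip_j(K)²))`. -/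
theorem observed_system_exponential_deviation {d : ℕ}
    (X : Set (EuclideanSpace ℝ (Fin d))) (hX : IsCompact X)
    (T : EuclideanSpace ℝ (Fin d) → EuclideanSpace ℝ (Fin d))
    (hT : Measurable T) (hTX : Set.MapsTo T X X)
    (μ : Measure (EuclideanSpace ℝ (Fin d))) [IsProbabilityMeasure μ]
    (hμX : μ X = 1) (hinv : μ.map T = μ)
    (C : ℝ) (hC : 0 < C)
    (hconc : ∀ (n : ℕ), 1 ≤ n → ∀ (K : (Fin n → EuclideanSpace ℝ (Fin d)) → ℝ)
      (L : Fin n → ℝ), SepLip K L →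
      ∫ x, Real.exp (K (fun i => T^[(i : ℕ)] x)
          - ∫ z, K (fun i => T^[(i : ℕ)] z) ∂μ) ∂μ
        ≤ Real.exp (C * ∑ j, L j ^ 2))
    (P : Measure (EuclideanSpace ℝ (Fin d))) [IsProbabilityMeasure P]
    (hP : ∀ᵐ ξ ∂P, ‖ξ‖ ≤ 1) :
    ∃ D : ℝ, 0 < D ∧ ∀ ε : ℝ, 0 < ε → ∀ (n : ℕ), 1 ≤ n →
      ∀ (K : (Fin n → EuclideanSpace ℝ (Fin d)) → ℝ) (L : Fin n → ℝ), SepLip K L →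
      ∀ t : ℝ, 0 < t →
      ((μ.prod (Measure.pi fun _ : Fin n => P))
          {p | t ≤ |K (fun i => T^[(i : ℕ)] p.1 + ε • p.2 i)
            - ∫ p', K (fun i => T^[(i : ℕ)] p'.1 + ε • p'.2 i)
                ∂(μ.prod (Measure.pi fun _ : Fin n => P))|}).toReal
        ≤ 2 * Real.exp (-t ^ 2 / (4 * D * (1 + ε ^ 2) * ∑ j, L j ^ 2)) :=
  observed_system_exponential_deviation_general X hX T hT hTX μ hμX C hconc P hP
end
end

section
/- Suppose the dynamical system (X,T,μ) satisfies the polynomial concentration inequality with moment q ≥ 2 and constant C_q > 0. Let f : X → ℝ be Lipschitz with ∫ f dμ = 0, and set a_f = Lip(f)·‖f‖_∞. Then for every k ≥ 0, every n ≥ 1, and every t > 0, μ({x : |CÔV_n(k)(x) − Cov(k)| > t}) ≤ C_q (2 a_f / t)^q ((n + k) / n²)^{q/2}. -/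
/-!
Extend `f` from `X` to a Lipschitz function `g` on the whole space with the same constants
(McShane extension, truncated at `±Mf`). Almost every point and its `k`-th iterate lie in `X`, so
almost surely the estimator equals `K (x, T x, …, T^[n+k-1] x)` with
`K (x₀, …, x_{n+k-1}) = (1/n) ∑_{i<n} g xᵢ * g x_{i+k}`, and by invariance the mean of this
Birkhoff average is the auto-covariance. Moving the coordinate `xⱼ` only changes the terms with
`i = j` or `i + k = j`, so `Lipⱼ K ≤ 2 a_f / n`. Markov's inequality for the `q`-th moment and the
concentration inequality, with `∑ⱼ (Lipⱼ K)² = (n + k) (2 a_f / n)²`, give the bound.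
-/

open MeasureTheory Real

noncomputable section

open Finset

theorem LipschitzOnWith.exists_lipschitzWith_abs_le {α : Type*} [PseudoMetricSpace α]
    {f : α → ℝ} {s : Set α} {K : NNReal} {M : ℝ} (hf : LipschitzOnWith K f s) (hM : 0 ≤ M)
    (hfM : ∀ x ∈ s, |f x| ≤ M) :
    ∃ g : α → ℝ, LipschitzWith K g ∧ Set.EqOn f g s ∧ ∀ x, |g x| ≤ M := by
  obtain ⟨g, hg, hfg⟩ := hf.extend_real
  refine ⟨fun x => max (-M) (min (g x) M), (hg.min_const M).const_max (-M), fun x hx => ?_,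
    fun x => abs_le.2 ⟨le_max_left _ _, max_le (by linarith) (min_le_right _ _)⟩⟩
  obtain ⟨h₁, h₂⟩ := abs_le.1 (hfM x hx)
  simp only [← hfg hx, min_eq_left h₂, max_eq_right h₁]

theorem abs_mul_apply_le_sq {α : Type*} {g : α → ℝ} {M : ℝ} (hgM : ∀ x, |g x| ≤ M) (a b : α) :
    |g a * g b| ≤ M ^ 2 := by
  rw [abs_mul, sq]
  exact mul_le_mul (hgM a) (hgM b) (abs_nonneg _) ((abs_nonneg _).trans (hgM a))

theorem LipschitzWith.abs_mul_sub_mul_le {α : Type*} [PseudoMetricSpace α] {g : α → ℝ}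
    {K : NNReal} {M : ℝ} (hg : LipschitzWith K g) (hgM : ∀ x, |g x| ≤ M) (a b c d : α) :
    |g a * g b - g c * g d| ≤ K * M * (dist a c + dist b d) := by
  have hM : 0 ≤ M := (abs_nonneg _).trans (hgM a)
  have hac := hg.dist_le_mul a c
  have hbd := hg.dist_le_mul b d
  rw [Real.dist_eq] at hac hbd
  calc |g a * g b - g c * g d| = |(g a - g c) * g b + g c * (g b - g d)| := by
        congr 1; ring
    _ ≤ |g a - g c| * |g b| + |g c| * |g b - g d| := by
        simpa only [abs_mul] using abs_add_le ((g a - g c) * g b) (g c * (g b - g d))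
    _ ≤ K * dist a c * M + M * (K * dist b d) :=
        add_le_add (mul_le_mul hac (hgM b) (abs_nonneg _) (by positivity))
          (mul_le_mul (hgM c) hbd (abs_nonneg _) hM)
    _ = K * M * (dist a c + dist b d) := by ring

theorem sum_dist_comp_update_le {ι κ E : Type*} [Fintype ι] [Fintype κ] [DecidableEq κ]
    [PseudoMetricSpace E] {e : ι → κ} (he : Function.Injective e) (x : κ → E) (j : κ) (y : E) :
    ∑ i, dist (x (e i)) (Function.update x j y (e i)) ≤ dist (x j) y := by
  calc ∑ i, dist (x (e i)) (Function.update x j y (e i))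
      = ∑ m ∈ univ.map ⟨e, he⟩, dist (x m) (Function.update x j y m) := by
        rw [sum_map]; rfl
    _ ≤ ∑ m, dist (x m) (Function.update x j y m) :=
        sum_le_univ_sum_of_nonneg fun _ => dist_nonneg
    _ = dist (x j) y := by
        rw [Fintype.sum_eq_single j fun m hm => by simp [Function.update_of_ne hm]]
        simp

def lagProductMean {E : Type*} (g : E → ℝ) (n k : ℕ) (x : Fin (n + k) → E) : ℝ :=
  1 / n * ∑ i : Fin n, g (x (Fin.castAdd k i)) * g (x (i.addNat k))

section lagProductMean

variable {E : Type*} {g : E → ℝ} {n k : ℕ}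

theorem continuous_lagProductMean [TopologicalSpace E] (hg : Continuous g) :
    Continuous (lagProductMean g n k) := by
  unfold lagProductMean
  fun_prop

theorem abs_lagProductMean_le {M : ℝ} (hgM : ∀ x, |g x| ≤ M) (x : Fin (n + k) → E) :
    |lagProductMean g n k x| ≤ M ^ 2 := by
  rw [lagProductMean, abs_mul, abs_of_nonneg (by positivity)]
  calc 1 / n * |∑ i : Fin n, g (x (Fin.castAdd k i)) * g (x (i.addNat k))|
      ≤ 1 / n * ∑ _i : Fin n, M ^ 2 := by
        gcongr
        exact (abs_sum_le_sum_abs _ _).trans (sum_le_sum fun i _ => abs_mul_apply_le_sq hgM _ _)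
    _ ≤ M ^ 2 := by
        rcases eq_or_ne n 0 with rfl | hn
        · simp [sq_nonneg]
        · simp [hn]

theorem sepLip_lagProductMean [PseudoMetricSpace E] {K : NNReal} {M : ℝ}
    (hg : LipschitzWith K g) (hgM : ∀ x, |g x| ≤ M) :
    SepLip (lagProductMean g n k) (fun _ => 2 * (K * M) / n) := by
  intro x j y
  set u := Function.update x j y
  have hM : 0 ≤ M := (abs_nonneg _).trans (hgM y)
  calc |lagProductMean g n k x - lagProductMean g n k u|
      = 1 / n * |∑ i : Fin n, (g (x (Fin.castAdd k i)) * g (x (i.addNat k))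
          - g (u (Fin.castAdd k i)) * g (u (i.addNat k)))| := by
        rw [lagProductMean, lagProductMean, ← mul_sub, ← sum_sub_distrib, abs_mul,
          abs_of_nonneg (by positivity)]
    _ ≤ 1 / n * ∑ i : Fin n, K * M * (dist (x (Fin.castAdd k i)) (u (Fin.castAdd k i))
          + dist (x (i.addNat k)) (u (i.addNat k))) := by
        gcongr
        exact (abs_sum_le_sum_abs _ _).trans
          (sum_le_sum fun i _ => hg.abs_mul_sub_mul_le hgM _ _ _ _)
    _ = 1 / n * (K * M) * (∑ i : Fin n, dist (x (Fin.castAdd k i)) (u (Fin.castAdd k i))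
          + ∑ i : Fin n, dist (x (i.addNat k)) (u (i.addNat k))) := by
        rw [← sum_add_distrib, ← mul_sum]
        ring
    _ ≤ 1 / n * (K * M) * (dist (x j) y + dist (x j) y) := by
        gcongr
        · exact sum_dist_comp_update_le (Fin.castAdd_injective n k) x j y
        · exact sum_dist_comp_update_le (Fin.addNatEmb k).injective x j y
    _ = 2 * (K * M) / n * dist (x j) y := by ring

theorem birkhoffAverage_mul_comp_iterate (T : E → E) (x : E) :
    birkhoffAverage ℝ T (fun y => g y * g (T^[k] y)) n x
      = 1 / n * ∑ i ∈ range n, g (T^[i] x) * g (T^[i + k] x) := by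
  simp only [birkhoffAverage, birkhoffSum, smul_eq_mul, one_div, ← Function.iterate_add_apply,
    add_comm k]

theorem lagProductMean_orbit (T : E → E) (x : E) :
    lagProductMean g n k (fun i => T^[i] x)
      = birkhoffAverage ℝ T (fun y => g y * g (T^[k] y)) n x := by
  rw [birkhoffAverage_mul_comp_iterate, lagProductMean,
    ← Fin.sum_univ_eq_sum_range (fun i => g (T^[i] x) * g (T^[i + k] x))]
  rfl

end lagProductMean

namespace MeasureTheory.MeasurePreserving

variable {α : Type*} [MeasurableSpace α] {μ : Measure α} {T : α → α}

theorem integral_birkhoffSum {E : Type*} [NormedAddCommGroup E] [NormedSpace ℝ E]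
    (hT : MeasurePreserving T μ μ) {φ : α → E} (hφ : Integrable φ μ) (n : ℕ) :
    ∫ x, birkhoffSum T φ n x ∂μ = n • ∫ x, φ x ∂μ := by
  have hiter (i : ℕ) : ∫ x, φ (T^[i] x) ∂μ = ∫ x, φ x ∂μ := by
    rw [← integral_map (hT.iterate i).aemeasurable, (hT.iterate i).map_eq]
    exact hφ.aestronglyMeasurable.mono_ac (hT.iterate i).map_eq.absolutelyContinuous
  simp only [birkhoffSum]
  rw [integral_finsetSum (f := fun i x => φ (T^[i] x)) _ fun i _ =>
    (hT.iterate i).integrable_comp_of_integrable hφ]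
  simp [hiter]

theorem integral_birkhoffAverage {E : Type*} [NormedAddCommGroup E] [NormedSpace ℝ E]
    (hT : MeasurePreserving T μ μ) {φ : α → E} (hφ : Integrable φ μ) {n : ℕ} (hn : n ≠ 0) :
    ∫ x, birkhoffAverage ℝ T φ n x ∂μ = ∫ x, φ x ∂μ := by
  simp only [birkhoffAverage]
  rw [integral_smul, hT.integral_birkhoffSum hφ, ← Nat.cast_smul_eq_nsmul ℝ, smul_smul,
    inv_mul_cancel₀ (Nat.cast_ne_zero.2 hn), one_smul]

theorem integral_lagProductMean_orbit [IsFiniteMeasure μ] (hT : MeasurePreserving T μ μ)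
    {g : α → ℝ} (hg : Measurable g) {M : ℝ} (hgM : ∀ x, |g x| ≤ M) {n : ℕ} (hn : n ≠ 0) (k : ℕ) :
    ∫ x, lagProductMean g n k (fun i => T^[i] x) ∂μ = ∫ x, g x * g (T^[k] x) ∂μ := by
  simp only [lagProductMean_orbit]
  exact hT.integral_birkhoffAverage (.of_bound (hg.mul (hg.comp (hT.measurable.iterate k))
    ).aestronglyMeasurable (M ^ 2) (ae_of_all _ fun x => abs_mul_apply_le_sq hgM _ _)) hn

end MeasureTheory.MeasurePreserving

theorem MeasureTheory.measureReal_lt_abs_sub_integral_le {Ω : Type*} [MeasurableSpace Ω]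
    {μ : Measure Ω} [IsFiniteMeasure μ] {W : Ω → ℝ} {C q t : ℝ}
    (hW : AEStronglyMeasurable W μ) (hWC : ∀ x, |W x| ≤ C) (hq : 0 ≤ q) (ht : 0 < t) :
    μ.real {x | t < |W x - ∫ z, W z ∂μ|} ≤ (∫ x, |W x - ∫ z, W z ∂μ| ^ q ∂μ) / t ^ q := by
  set V := fun x => W x - ∫ z, W z ∂μ
  have hV : MemLp V (ENNReal.ofReal q) μ :=
    .of_bound (hW.sub aestronglyMeasurable_const) (C + |∫ z, W z ∂μ|)
      (ae_of_all _ fun x => (norm_sub_le _ _).trans (add_le_add_left (hWC x) _))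
  have hint : Integrable (fun x => |V x| ^ q) μ := by
    simpa [ENNReal.toReal_ofReal hq] using hV.integrable_norm_rpow'
  rw [le_div_iff₀ (rpow_pos_of_pos ht q), mul_comm]
  calc t ^ q * μ.real {x | t < |V x|} ≤ t ^ q * μ.real {x | t ^ q ≤ |V x| ^ q} := by
        refine mul_le_mul_of_nonneg_left (measureReal_mono ?_) (by positivity)
        intro x (hx : t < |V x|)
        exact rpow_le_rpow ht.le hx.le hq
    _ ≤ ∫ x, |V x| ^ q ∂μ :=
        mul_meas_ge_le_integral_of_nonneg (ae_of_all _ fun x => by positivity) hint _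

theorem sum_const_div_sq_rpow_half {a : ℝ} (ha : 0 ≤ a) (q : ℝ) (m n : ℕ) :
    (∑ _j : Fin m, (a / n) ^ 2) ^ (q / 2) = a ^ q * (m / n ^ 2) ^ (q / 2) := by
  have hsum : ∑ _j : Fin m, (a / n) ^ 2 = a ^ 2 * (m / n ^ 2) := by
    simp only [sum_const, card_univ, Fintype.card_fin, nsmul_eq_mul]
    ring
  rw [hsum, mul_rpow (by positivity) (by positivity), ← rpow_natCast a 2, ← rpow_mul ha]
  ring_nf

theorem autocovariance_deviation_polynomial_general {d : ℕ}
    (X : Set (EuclideanSpace ℝ (Fin d))) (hX : IsCompact X)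
    (T : EuclideanSpace ℝ (Fin d) → EuclideanSpace ℝ (Fin d))
    (hT : Measurable T)
    (μ : Measure (EuclideanSpace ℝ (Fin d))) [IsProbabilityMeasure μ]
    (hμX : μ X = 1) (hinv : μ.map T = μ)
    (q : ℝ) (hq : 2 ≤ q) (Cq : ℝ)
    (hconc : ∀ (n : ℕ), 1 ≤ n → ∀ (K : (Fin n → EuclideanSpace ℝ (Fin d)) → ℝ)
      (L : Fin n → ℝ), SepLip K L →
      ∫ x, |K (fun i => T^[(i : ℕ)] x)
          - ∫ z, K (fun i => T^[(i : ℕ)] z) ∂μ| ^ q ∂μ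
        ≤ Cq * (∑ j, L j ^ 2) ^ (q / 2))
    (f : EuclideanSpace ℝ (Fin d) → ℝ)
    (Lf Mf : ℝ) (hLf : 0 ≤ Lf) (hMf : 0 ≤ Mf)
    (hfLip : ∀ x ∈ X, ∀ y ∈ X, |f x - f y| ≤ Lf * dist x y)
    (hfBdd : ∀ x ∈ X, |f x| ≤ Mf) :
    ∀ (k : ℕ) (n : ℕ), 1 ≤ n → ∀ t : ℝ, 0 < t →
      (μ {x | t < |(1 / (n : ℝ)) * ∑ i ∈ Finset.range n,
            f (T^[i] x) * f (T^[i + k] x)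
          - ∫ z, f z * f (T^[k] z) ∂μ|}).toReal
        ≤ Cq * (2 * (Lf * Mf) / t) ^ q
            * (((n : ℝ) + (k : ℝ)) / (n : ℝ) ^ 2) ^ (q / 2) := by
  intro k n hn t ht
  have hTμ : MeasurePreserving T μ μ := ⟨hT, hinv⟩
  obtain ⟨g, hg, hfg, hgM⟩ := (LipschitzOnWith.of_dist_le_mul (K := ⟨Lf, hLf⟩) hfLip
    |>.exists_lipschitzWith_abs_le hMf hfBdd)
  have hXae : ∀ᵐ x ∂μ, x ∈ X :=
    mem_ae_iff.2 ((prob_compl_eq_zero_iff hX.isClosed.measurableSet).2 hμX)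
  have hfg_ae : (fun x => f x * f (T^[k] x)) =ᵐ[μ] fun x => g x * g (T^[k] x) := by
    filter_upwards [hXae, (hTμ.iterate k).quasiMeasurePreserving.ae hXae] with x hx hkx
    rw [hfg hx, hfg hkx]
  set Z := fun x => lagProductMean g n k (fun i : Fin (n + k) => T^[(i : ℕ)] x)
  have hest : ∀ᵐ x ∂μ, 1 / (n : ℝ) * ∑ i ∈ range n, f (T^[i] x) * f (T^[i + k] x) = Z x := by
    filter_upwards [hTμ.quasiMeasurePreserving.birkhoffAverage_ae_eq_of_ae_eq ℝ hfg_ae n] with x hx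
    rw [← birkhoffAverage_mul_comp_iterate, hx]
    exact (lagProductMean_orbit T x).symm
  have hcov : ∫ z, f z * f (T^[k] z) ∂μ = ∫ z, Z z ∂μ := by
    rw [integral_congr_ae hfg_ae, hTμ.integral_lagProductMean_orbit hg.continuous.measurable hgM
      (Nat.one_le_iff_ne_zero.1 hn)]
  rw [← measureReal_def, hcov, measureReal_congr (t := {x | t < |Z x - ∫ z, Z z ∂μ|})
    (Filter.eventuallyEq_set.2 (hest.mono fun x hx => by simp only [Set.mem_ofPred_eq, hx]))]
  calc _ ≤ (∫ x, |Z x - ∫ z, Z z ∂μ| ^ q ∂μ) / t ^ q :=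
        measureReal_lt_abs_sub_integral_le ((continuous_lagProductMean hg.continuous).measurable
          |>.comp (measurable_pi_lambda _ fun i => hT.iterate i)).aestronglyMeasurable
          (fun x => abs_lagProductMean_le hgM _) (by linarith) ht
    _ ≤ Cq * (∑ _j : Fin (n + k), (2 * (Lf * Mf) / n) ^ 2) ^ (q / 2) / t ^ q := by
        gcongr
        exact hconc (n + k) (by omega) _ _ (sepLip_lagProductMean hg hgM)
    _ = _ := by
        rw [sum_const_div_sq_rpow_half (by positivity), div_rpow (by positivity) ht.le]
        push_cast
        ring

/-- Deviation bound for the empirical estimator of the auto-covariance function of a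
Lipschitz observable `f` (with Lipschitz constant `Lf` and sup norm bound `Mf` on `X`,
`a_f = Lf * Mf`), for a system satisfying the polynomial concentration inequality:
`μ(|Côv_n(k) - Cov(k)| > t) ≤ C_q (2 a_f / t)^q ((n+k)/n²)^{q/2}`. -/
theorem autocovariance_deviation_polynomial {d : ℕ}
    (X : Set (EuclideanSpace ℝ (Fin d))) (hX : IsCompact X)
    (T : EuclideanSpace ℝ (Fin d) → EuclideanSpace ℝ (Fin d))
    (hT : Measurable T) (hTX : Set.MapsTo T X X)
    (μ : Measure (EuclideanSpace ℝ (Fin d))) [IsProbabilityMeasure μ]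
    (hμX : μ X = 1) (hinv : μ.map T = μ)
    (q : ℝ) (hq : 2 ≤ q) (Cq : ℝ) (hCq : 0 < Cq)
    (hconc : ∀ (n : ℕ), 1 ≤ n → ∀ (K : (Fin n → EuclideanSpace ℝ (Fin d)) → ℝ)
      (L : Fin n → ℝ), SepLip K L →
      ∫ x, |K (fun i => T^[(i : ℕ)] x)
          - ∫ z, K (fun i => T^[(i : ℕ)] z) ∂μ| ^ q ∂μ
        ≤ Cq * (∑ j, L j ^ 2) ^ (q / 2))
    (f : EuclideanSpace ℝ (Fin d) → ℝ) (hf : Measurable f)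
    (Lf Mf : ℝ) (hLf : 0 ≤ Lf) (hMf : 0 ≤ Mf)
    (hfLip : ∀ x ∈ X, ∀ y ∈ X, |f x - f y| ≤ Lf * dist x y)
    (hfBdd : ∀ x ∈ X, |f x| ≤ Mf)
    (hf0 : ∫ x, f x ∂μ = 0) :
    ∀ (k : ℕ) (n : ℕ), 1 ≤ n → ∀ t : ℝ, 0 < t →
      (μ {x | t < |(1 / (n : ℝ)) * ∑ i ∈ Finset.range n,
            f (T^[i] x) * f (T^[i + k] x)
          - ∫ z, f z * f (T^[k] z) ∂μ|}).toReal
        ≤ Cq * (2 * (Lf * Mf) / t) ^ q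
            * (((n : ℝ) + (k : ℝ)) / (n : ℝ) ^ 2) ^ (q / 2) :=
  autocovariance_deviation_polynomial_general X hX T hT μ hμX hinv q hq Cq hconc f Lf Mf hLf hMf
    hfLip hfBdd

end
end
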